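/- Suppose P solves the algebraic Riccati equation AᵀP + PA − P B R⁻¹ Bᵀ P + Q = 0 with R > 0 a scalar, Q positive semidefinite, P symmetric positive definite, and the closed-loop matrix A_c = A − B R⁻¹ Bᵀ P is such that all trajectories of ẋ = A_c x tend to 0. Then for the control u = −R⁻¹ Bᵀ P x along such a trajectory starting at x(0) = x₀, the cost ∫₀^∞ (xᵀQx + R u²) dt equals x₀ᵀ P x₀. -/

import Mathlib

open Matrix MeasureTheory

/-! `V(v) = vᵀ P v` is a Lyapunov function for the closed loop: the Riccati equation rewritten
in terms of `A_c` is the Lyapunov equation `A_cᵀ P + P A_c = -(Q + R⁻¹ P B Bᵀ P)`, so along the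
trajectory `d/dt V(x t) = -(xᵀ Q x + R u²)`. Since this integrand is nonnegative and
`V(x t) → 0`, the improper integral over `(0, ∞)` exists and equals `V(x 0) = x₀ᵀ P x₀`. -/

section Algebra

variable {ι α : Type*} [Fintype ι] [CommRing α]

lemma mulVec_dotProduct_mulVec_add (M P : Matrix ι ι α) (v : ι → α) :
    (M *ᵥ v) ⬝ᵥ (P *ᵥ v) + v ⬝ᵥ (P *ᵥ (M *ᵥ v)) = v ⬝ᵥ ((Mᵀ * P + P * M) *ᵥ v) := by
  rw [dotProduct_comm, dotProduct_mulVec, ← mulVec_transpose, dotProduct_comm, add_mulVec,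
    dotProduct_add, mulVec_mulVec, mulVec_mulVec]

lemma dotProduct_vecMulVec_mulVec_self {P : Matrix ι ι α} (hP : Pᵀ = P) (b v : ι → α) :
    v ⬝ᵥ (vecMulVec (P *ᵥ b) (b ᵥ* P) *ᵥ v) = (b ⬝ᵥ (P *ᵥ v)) ^ 2 := by
  rw [vecMulVec_mulVec, op_smul_eq_smul, dotProduct_smul, smul_eq_mul, ← dotProduct_mulVec,
    dotProduct_comm v, dotProduct_mulVec, ← mulVec_transpose, hP, dotProduct_comm, sq]

lemma closedLoop_lyapunov_of_riccati {A Q P : Matrix ι ι α} {b : ι → α} {r : α} (hP : Pᵀ = P)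
    (hARE : Aᵀ * P + P * A - r • vecMulVec (P *ᵥ b) (b ᵥ* P) + Q = 0) :
    (A - r • vecMulVec b (b ᵥ* P))ᵀ * P + P * (A - r • vecMulVec b (b ᵥ* P)) =
      -(Q + r • vecMulVec (P *ᵥ b) (b ᵥ* P)) := by
  have hbP : b ᵥ* P = P *ᵥ b := by rw [← mulVec_transpose, hP]
  rw [transpose_sub, transpose_smul, transpose_vecMulVec, sub_mul, mul_sub, Matrix.smul_mul,
    Matrix.mul_smul, vecMulVec_mul, mul_vecMulVec, hbP]
  rw [hbP] at hARE
  linear_combination (norm := module) hARE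

end Algebra

section Calculus

variable {ι : Type*} [Fintype ι]

lemma HasDerivAt.dotProduct_mulVec_self (P : Matrix ι ι ℝ) {y : ℝ → ι → ℝ} {y' : ι → ℝ} {t : ℝ}
    (hy : HasDerivAt y y' t) :
    HasDerivAt (fun s => y s ⬝ᵥ (P *ᵥ y s)) (y' ⬝ᵥ (P *ᵥ y t) + y t ⬝ᵥ (P *ᵥ y')) t := by
  have hyc : ∀ i, HasDerivAt (fun s => y s i) (y' i) t := fun i => hasDerivAt_pi.1 hy i
  simp only [dotProduct, mulVec, ← Finset.sum_add_distrib]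
  exact HasDerivAt.fun_sum fun i _ =>
    (hyc i).mul (HasDerivAt.fun_sum fun j _ => (hyc j).const_mul (P i j))

lemma HasDerivAt.dotProduct_mulVec_self_of_mulVec {M : Matrix ι ι ℝ} (P : Matrix ι ι ℝ)
    {y : ℝ → ι → ℝ} {t : ℝ} (hy : HasDerivAt y (M *ᵥ y t) t) :
    HasDerivAt (fun s => y s ⬝ᵥ (P *ᵥ y s)) (y t ⬝ᵥ ((Mᵀ * P + P * M) *ᵥ y t)) t :=
  mulVec_dotProduct_mulVec_add M P (y t) ▸ hy.dotProduct_mulVec_self P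

lemma hasDerivAt_exp_smul_mulVec [DecidableEq ι] (M : Matrix ι ι ℝ) (v : ι → ℝ) (t : ℝ) :
    HasDerivAt (fun s : ℝ => NormedSpace.exp (s • M) *ᵥ v)
      (M *ᵥ (NormedSpace.exp (t • M) *ᵥ v)) t := by
  let _ := Matrix.linftyOpNormedRing (n := ι) (α := ℝ)
  let _ := Matrix.linftyOpNormedAlgebra (n := ι) (R := ℝ) (α := ℝ)
  have := (((mulVecBilin ℝ ℝ).flip v).toContinuousLinearMap.hasFDerivAt).comp_hasDerivAt t
    (hasDerivAt_exp_smul_const' (𝕂 := ℝ) M t)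
  simp only [LinearMap.coe_toContinuousLinearMap', Function.comp_def, LinearMap.flip_apply,
    mulVecBilin_apply] at this
  exact this.congr_deriv (mulVec_mulVec _ _ _).symm

lemma continuous_dotProduct_mulVec_self (P : Matrix ι ι ℝ) :
    Continuous fun v : ι → ℝ => v ⬝ᵥ (P *ᵥ v) :=
  continuous_id.dotProduct (continuous_const.matrix_mulVec continuous_id)

end Calculus

theorem lqr_cost_eq_riccati_quadratic_form
    (n : ℕ) (A Q P : Matrix (Fin n) (Fin n) ℝ) (B : Fin n → ℝ) (R : ℝ)
    (hR : 0 < R) (hQ : Q.PosSemidef) (hP : P.PosDef)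
    (hARE : Aᵀ * P + P * A - R⁻¹ • vecMulVec (P *ᵥ B) (B ᵥ* P) + Q = 0)
    (x₀ : Fin n → ℝ)
    (Ac : Matrix (Fin n) (Fin n) ℝ)
    (hAc : Ac = A - R⁻¹ • vecMulVec B (B ᵥ* P))
    (x : ℝ → Fin n → ℝ)
    (hx : ∀ t, x t = NormedSpace.exp (t • Ac) *ᵥ x₀)
    (hstab : Filter.Tendsto x Filter.atTop (nhds 0))
    (u : ℝ → ℝ)
    (hu : ∀ t, u t = -R⁻¹ * (B ⬝ᵥ (P *ᵥ x t))) :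
    ∫ t in Set.Ioi (0 : ℝ), (x t ⬝ᵥ (Q *ᵥ x t) + R * (u t) ^ 2) = x₀ ⬝ᵥ (P *ᵥ x₀) := by
  have hPt : Pᵀ = P := by
    simpa [conjTranspose_eq_transpose_of_trivial] using hP.isHermitian.eq
  have hV : ∀ t, HasDerivAt (fun s => -(x s ⬝ᵥ (P *ᵥ x s)))
      (x t ⬝ᵥ (Q *ᵥ x t) + R * (u t) ^ 2) t := by
    intro t
    have hxt : HasDerivAt x (Ac *ᵥ x t) t := by
      simpa only [← hx] using hasDerivAt_exp_smul_mulVec Ac x₀ t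
    refine (hxt.dotProduct_mulVec_self_of_mulVec P).neg.congr_deriv ?_
    rw [hAc, closedLoop_lyapunov_of_riccati hPt hARE, neg_mulVec, dotProduct_neg, neg_neg,
      add_mulVec, dotProduct_add, smul_mulVec, dotProduct_smul,
      dotProduct_vecMulVec_mulVec_self hPt, hu, smul_eq_mul]
    field_simp
  have hV_tendsto : Filter.Tendsto (fun s => -(x s ⬝ᵥ (P *ᵥ x s))) Filter.atTop (nhds 0) := by
    simpa using (((continuous_dotProduct_mulVec_self P).tendsto 0).comp hstab).neg
  have hcost_nonneg : ∀ t ∈ Set.Ioi (0 : ℝ), 0 ≤ x t ⬝ᵥ (Q *ᵥ x t) + R * (u t) ^ 2 :=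
    fun t _ => add_nonneg (hQ.dotProduct_mulVec_nonneg (x t)) (by positivity)
  rw [integral_Ioi_of_hasDerivAt_of_nonneg' (fun t _ => hV t) hcost_nonneg hV_tendsto, hx 0]
  simp
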